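/- For 0 ≤ i ≤ n, define the polynomial G_i(x,y) = (1/(i!·(n−i)!)) · (∏_{k=0}^{i−1}(x−α−k)) · (∏_{k=0}^{n−i−1}(y−k)) ∈ ℚ[x,y]. Then G_0, G_1, …, G_n form a basis of the ℚ-vector space { f ∈ ℚ[x,y] : f has total degree ≤ n and f(q) = 0 for all q ∈ Q }; in particular, this space has dimension n+1. -/

import Mathlib

/-- The interpolation polynomial
`G_i(x,y) = (1/(i!(n-i)!)) ∏_{k=0}^{i-1}(x-α-k) ∏_{k=0}^{n-i-1}(y-k)`. -/
noncomputable def Gpoly (n α : ℕ) (i : ℕ) : MvPolynomial (Fin 2) ℚ :=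
  MvPolynomial.C (1 / ((Nat.factorial i : ℚ) * (Nat.factorial (n - i) : ℚ))) *
    (∏ k ∈ Finset.range i, (MvPolynomial.X 0 - MvPolynomial.C ((α : ℚ) + (k : ℚ)))) *
    (∏ k ∈ Finset.range (n - i), (MvPolynomial.X 1 - MvPolynomial.C (k : ℚ)))

/-!
At the lattice point `(α + a, b)` the polynomial `G_i` takes the value `C(a, i) · C(b, n - i)`.
This vanishes when `a + b < n`, and on the diagonal `a + b = n` it is the Kronecker delta
`δ_{i,a}`, which gives linear independence. For spanning, `f - ∑ⱼ f(α + j, n - j) • G_j` has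
degree `≤ n` and vanishes on the whole triangle `a + b ≤ n`, hence is zero: if `x^s y^t` is a
monomial of top degree of a nonzero polynomial, the combinatorial Nullstellensatz finds a point
of the box `[0, s] × [0, t]`, which lies in the triangle, where the polynomial does not vanish.
-/

open MvPolynomial Finset

theorem MvPolynomial.eq_zero_of_totalDegree_le_of_eval_simplex_eq_zero {R σ : Type*}
    [CommRing R] [IsDomain R] [Fintype σ] {u : σ → ℕ ↪ R}
    {f : MvPolynomial σ R} {n : ℕ} (hf : f.totalDegree ≤ n)
    (heval : ∀ a : σ → ℕ, ∑ i, a i ≤ n → eval (fun i ↦ u i (a i)) f = 0) : f = 0 := by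
  by_contra hne
  obtain ⟨t, ht, htop⟩ : ∃ t ∈ f.support, f.totalDegree = t.degree :=
    exists_mem_eq_sup _ (nonempty_iff_ne_empty.mpr (mt support_eq_empty.mp hne)) _
  obtain ⟨x, hxS, hx⟩ := combinatorial_nullstellensatz_exists_eval_nonzero f t
    (mem_support_iff.mp ht) htop (fun i ↦ (range (t i + 1)).map (u i))
    (fun i ↦ by rw [card_map, card_range]; omega)
  choose a ha hxa using fun i ↦ mem_map.mp (hxS i)
  obtain rfl : x = fun i ↦ u i (a i) := by ext i; exact (hxa i).symm
  refine hx (heval a ?_)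
  calc ∑ i, a i ≤ ∑ i, t i := sum_le_sum fun i _ ↦ Nat.lt_succ_iff.mp (mem_range.mp (ha i))
    _ = f.totalDegree := by rw [htop, Finsupp.degree_eq_sum]
    _ ≤ n := hf

theorem MvPolynomial.totalDegree_prod_X_sub_C_le {R σ ι : Type*} [CommRing R] (s : Finset ι)
    (j : σ) (c : ι → R) : (∏ k ∈ s, (X j - C (c k) : MvPolynomial σ R)).totalDegree ≤ #s := by
  refine (totalDegree_finsetProd _ _).trans ?_
  refine (sum_le_card_nsmul _ _ 1 fun k _ ↦ ?_).trans (by simp)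
  have hX : (X j : MvPolynomial σ R).totalDegree ≤ 1 :=
    (totalDegree_monomial_le _ _).trans_eq (Finsupp.sum_single_index rfl)
  exact (totalDegree_sub _ _).trans (max_le hX ((totalDegree_C _).trans_le zero_le_one))

theorem Nat.cast_descFactorial_eq_prod_range {R : Type*} [CommRing R] (a i : ℕ) :
    (a.descFactorial i : R) = ∏ k ∈ range i, ((a : R) - k) := by
  induction i with
  | zero => simp
  | succ i ih =>
    rw [prod_range_succ, ← ih, Nat.descFactorial_succ]
    rcases le_or_gt i a with h | h
    · push_cast [Nat.cast_sub h]; ring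
    · simp [Nat.descFactorial_eq_zero_iff_lt.mpr h]

theorem Nat.choose_mul_choose_sub_sub {n i j : ℕ} (hi : i ≤ n) (hj : j ≤ n) :
    j.choose i * (n - j).choose (n - i) = if i = j then 1 else 0 := by
  split_ifs with h
  · simp [h]
  · rcases lt_or_gt_of_ne h with h | h
    · rw [Nat.choose_eq_zero_of_lt (by omega : n - j < n - i), mul_zero]
    · rw [Nat.choose_eq_zero_of_lt h, zero_mul]

theorem totalDegree_Gpoly_le (n α i : ℕ) : (Gpoly n α i).totalDegree ≤ i + (n - i) := by
  refine (totalDegree_mul _ _).trans ?_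
  refine add_le_add ((totalDegree_mul _ _).trans ?_) ?_
  · simpa only [totalDegree_C, zero_add, card_range]
      using totalDegree_prod_X_sub_C_le (range i) 0 fun k ↦ (α : ℚ) + k
  · simpa only [card_range] using totalDegree_prod_X_sub_C_le (range (n - i)) 1 fun k ↦ (k : ℚ)

theorem eval_Gpoly (n α i a b : ℕ) :
    eval ![(α : ℚ) + a, (b : ℚ)] (Gpoly n α i) = a.choose i * b.choose (n - i) := by
  have hshift : ∏ k ∈ range i, ((α : ℚ) + a - (α + k)) = ∏ k ∈ range i, ((a : ℚ) - k) :=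
    prod_congr rfl fun _ _ ↦ by ring
  simp only [Gpoly, map_mul, map_prod, map_sub, eval_X, eval_C, Matrix.cons_val_zero,
    Matrix.cons_val_one]
  rw [hshift, ← Nat.cast_descFactorial_eq_prod_range, ← Nat.cast_descFactorial_eq_prod_range,
    Nat.descFactorial_eq_factorial_mul_choose, Nat.descFactorial_eq_factorial_mul_choose]
  push_cast
  field_simp

theorem eval_Gpoly_eq_zero_of_add_lt {n α i a b : ℕ} (hab : a + b < n) :
    eval ![(α : ℚ) + a, (b : ℚ)] (Gpoly n α i) = 0 := by
  rw [eval_Gpoly]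
  rcases lt_or_ge a i with h | h
  · simp [Nat.choose_eq_zero_of_lt h]
  · simp [Nat.choose_eq_zero_of_lt (by omega : b < n - i)]

theorem eval_Gpoly_diagonal {n : ℕ} (α : ℕ) (i j : Fin (n + 1)) :
    eval ![(α : ℚ) + (j : ℕ), ((n - j : ℕ) : ℚ)] (Gpoly n α i) = if i = j then 1 else 0 := by
  rw [eval_Gpoly, ← Nat.cast_mul, Nat.choose_mul_choose_sub_sub (by omega) (by omega)]
  simp [Fin.val_inj]

theorem linearIndependent_Gpoly (n α : ℕ) :
    LinearIndependent ℚ fun i : Fin (n + 1) ↦ Gpoly n α i := by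
  let evalDiagonal : MvPolynomial (Fin 2) ℚ →ₗ[ℚ] Fin (n + 1) → ℚ :=
    LinearMap.pi fun j ↦ (aeval ![(α : ℚ) + (j : ℕ), ((n - j : ℕ) : ℚ)]).toLinearMap
  refine LinearIndependent.of_comp evalDiagonal ?_
  convert (Pi.basisFun ℚ (Fin (n + 1))).linearIndependent
  ext i j
  simp [evalDiagonal, eval_Gpoly_diagonal, Pi.single_apply, eq_comm]

theorem eq_sum_smul_Gpoly {n α : ℕ} {f : MvPolynomial (Fin 2) ℚ} (hf : f.totalDegree ≤ n)
    (hQ : ∀ a b : ℕ, a + b < n → eval ![(α : ℚ) + a, (b : ℚ)] f = 0) :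
    f = ∑ i : Fin (n + 1), eval ![(α : ℚ) + (i : ℕ), ((n - i : ℕ) : ℚ)] f • Gpoly n α i := by
  let u : Fin 2 → ℕ ↪ ℚ := ![⟨fun k ↦ (α : ℚ) + k, fun _ _ h ↦ by simpa using h⟩, Nat.castEmbedding]
  rw [← sub_eq_zero]
  refine eq_zero_of_totalDegree_le_of_eval_simplex_eq_zero (n := n) (u := u) ?_ ?_
  · refine (totalDegree_sub _ _).trans (max_le hf (totalDegree_finsetSum_le fun i _ ↦ ?_))
    exact (totalDegree_smul_le _ _).trans ((totalDegree_Gpoly_le n α i).trans (by omega))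
  · intro a ha
    have hpoint : (fun i ↦ u i (a i)) = ![(α : ℚ) + a 0, (a 1 : ℚ)] := by
      ext i; fin_cases i <;> rfl
    rw [Fin.sum_univ_two] at ha
    rw [hpoint, map_sub, map_sum]
    simp only [smul_eval]
    rcases ha.lt_or_eq with hlt | heq
    · simp [hQ _ _ hlt, eval_Gpoly_eq_zero_of_add_lt hlt]
    · obtain ⟨j, h0, h1⟩ : ∃ j : Fin (n + 1), a 0 = j ∧ a 1 = n - j :=
        ⟨⟨a 0, by omega⟩, rfl, by simp; omega⟩
      simp [h0, h1, eval_Gpoly_diagonal]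

theorem Gpoly_basis_general (n α : ℕ) (hn : 1 ≤ n) :
    (∀ i ≤ n, (Gpoly n α i).totalDegree ≤ n ∧
        ∀ a b : ℕ, a + b ≤ n - 1 →
          MvPolynomial.eval ![(α : ℚ) + (a : ℚ), (b : ℚ)] (Gpoly n α i) = 0) ∧
    LinearIndependent ℚ (fun i : Fin (n + 1) => Gpoly n α (i : ℕ)) ∧
    (∀ f : MvPolynomial (Fin 2) ℚ, f.totalDegree ≤ n →
        (∀ a b : ℕ, a + b ≤ n - 1 →
          MvPolynomial.eval ![(α : ℚ) + (a : ℚ), (b : ℚ)] f = 0) →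
        ∃ c : Fin (n + 1) → ℚ, f = ∑ i : Fin (n + 1), c i • Gpoly n α (i : ℕ)) := by
  refine ⟨fun i hi ↦ ⟨?_, fun a b hab ↦ eval_Gpoly_eq_zero_of_add_lt (by omega)⟩,
    linearIndependent_Gpoly n α, fun f hf hQ ↦ ⟨_, eq_sum_smul_Gpoly hf fun a b hab ↦ hQ a b ?_⟩⟩
  · exact (totalDegree_Gpoly_le n α i).trans (by omega)
  · omega

/-- `G_0, …, G_n` form a basis of the space of polynomials of
total degree `≤ n` vanishing at all the points of
`Q = {(α+i, j) : 0 ≤ i ≤ n-1, 0 ≤ j ≤ n-1-i}`: each `G_i` lies in this space,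
they are linearly independent, and every member of the space is a linear
combination of them (so the space has dimension `n+1`). -/
theorem Gpoly_basis (n α β : ℕ) (hn : 1 ≤ n) (hα : 1 ≤ α) :
    (∀ i ≤ n, (Gpoly n α i).totalDegree ≤ n ∧
        ∀ a b : ℕ, a + b ≤ n - 1 →
          MvPolynomial.eval ![(α : ℚ) + (a : ℚ), (b : ℚ)] (Gpoly n α i) = 0) ∧
    LinearIndependent ℚ (fun i : Fin (n + 1) => Gpoly n α (i : ℕ)) ∧
    (∀ f : MvPolynomial (Fin 2) ℚ, f.totalDegree ≤ n →
        (∀ a b : ℕ, a + b ≤ n - 1 →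
          MvPolynomial.eval ![(α : ℚ) + (a : ℚ), (b : ℚ)] f = 0) →
        ∃ c : Fin (n + 1) → ℚ, f = ∑ i : Fin (n + 1), c i • Gpoly n α (i : ℕ)) :=
  Gpoly_basis_general n α hn
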